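/- Let S have a zero element 0_S (i.e., 0_S·λ = 0_S for all λ ∈ S) and let S⊗G be the S-expanded multialgebra of a higher-order Lie algebra G of even order n. Then the quotient of S⊗G by the subspace spanned by {0_S ⊗ x : x ∈ G} carries a well-defined induced n-bracket which is alternating and satisfies the generalized Jacobi identity (the 0_S-reduced multialgebra). -/

import Mathlib

/-- Generalized Jacobi identity for an alternating (m+1)-bracket. -/
def GJI {K G : Type*} [CommRing K] [AddCommGroup G] [Module K G] {m : ℕ}
    (B : AlternatingMap K G G (Fin (m + 1))) : Prop :=
  ∀ x : Fin (2 * m + 1) → G,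
    ∑ σ : Equiv.Perm (Fin (2 * m + 1)), (Equiv.Perm.sign σ : ℤ) •
      B (Fin.cons (B fun j => x (σ (Fin.castLE (by omega) j)))
        (fun j : Fin m => x (σ ⟨m + 1 + j.1, by have := j.isLt; omega⟩))) = 0

/-- n-fold product in a (possibly non-unital) multiplicative structure. -/
def sprod {S : Type*} [Mul S] {m : ℕ} (l : Fin (m + 1) → S) : S :=
  (List.ofFn fun j : Fin m => l j.succ).foldl (· * ·) (l 0)

/-- The generator `λ ⊗ x` of the S-expanded module `S ⊗ G` (modelled as the free
module `S →₀ G` on the semigroup S with coefficients in G). -/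
noncomputable def gen {S G : Type*} [AddCommGroup G] (lam : S) (x : G) : S →₀ G :=
  Finsupp.single lam x

/-
The expanded bracket of generators is `λ₀ ⋯ λₘ ⊗ [x₀, …, xₘ]`, and after adjoining a unit to `S`
that product is an honest finite product, so it does not see how the Jacobi sum permutes and nests
the factors: on generators the Jacobi sum of `S ⊗ G` is `(∏ λ) ⊗ (Jacobi sum of G) = 0`, and by
multilinearity the identity holds on all of `S ⊗ G`. If one argument is `0_S ⊗ x`, the product of
the labels is absorbed into `0_S`, so the span `N` of `0_S ⊗ G` is an ideal for the bracket. Over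
a field the bracket then descends to `(S ⊗ G) ⧸ N` through a linear section of the quotient map,
and the Jacobi identity passes to the quotient because the projection is surjective.
-/

open Equiv Function

section Semigroup

variable {S : Type*} [CommSemigroup S]

theorem WithOne.coe_sprod {m : ℕ} (l : Fin (m + 1) → S) :
    ((sprod l : S) : WithOne S) = ∏ k, (l k : WithOne S) := by
  have hfold : ∀ (L : List S) (a : S), ((L.foldl (· * ·) a : S) : WithOne S) =
      (a : WithOne S) * (L.map ((↑) : S → WithOne S)).prod := by
    intro L
    induction L with
    | nil => simp
    | cons b L ih => intro a; simp [ih, mul_assoc]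
  rw [sprod, hfold, List.map_ofFn, List.prod_ofFn, Fin.prod_univ_succ]
  rfl

theorem sprod_eq_of_absorbing {z : S} (hz : ∀ s, z * s = z) {m : ℕ} (l : Fin (m + 1) → S)
    {i : Fin (m + 1)} (hi : l i = z) : sprod l = z := by
  have habs : ∀ a : WithOne S, (z : WithOne S) * a = z := by
    rintro (_ | a)
    · exact mul_one _
    · exact congrArg _ (hz a)
  apply WithOne.coe_injective
  rw [WithOne.coe_sprod, ← Finset.mul_prod_erase _ _ (Finset.mem_univ i), hi, habs]

end Semigroup

section Jacobi

def jacobiHead (m : ℕ) : Fin (m + 1) → Fin (2 * m + 1) := Fin.castLE (by omega)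

def jacobiTail (m : ℕ) (j : Fin m) : Fin (2 * m + 1) := ⟨m + 1 + j, by omega⟩

def jacobiSplit (m : ℕ) : Fin (m + 1) ⊕ Fin m ≃ Fin (2 * m + 1) :=
  finSumFinEquiv.trans (finCongr (by omega))

theorem prod_jacobiHead_mul_prod_jacobiTail {M : Type*} [CommMonoid M] {m : ℕ}
    (f : Fin (2 * m + 1) → M) :
    (∏ j, f (jacobiHead m j)) * ∏ j, f (jacobiTail m j) = ∏ k, f k := by
  rw [← Equiv.prod_comp (jacobiSplit m), Fintype.prod_sum_type]
  rfl

theorem sprod_cons_sprod {S : Type*} [CommSemigroup S] {m : ℕ} (r : Fin (2 * m + 1) → S)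
    (σ : Perm (Fin (2 * m + 1))) :
    sprod (Fin.cons (sprod fun j => r (σ (jacobiHead m j))) fun j => r (σ (jacobiTail m j))) =
      sprod r := by
  apply WithOne.coe_injective
  rw [WithOne.coe_sprod, Fin.prod_univ_succ, Fin.cons_zero, WithOne.coe_sprod, WithOne.coe_sprod]
  simp only [Fin.cons_succ]
  rw [prod_jacobiHead_mul_prod_jacobiTail (fun k => ((r (σ k) : S) : WithOne S)),
    Equiv.prod_comp σ (fun k => ((r k : S) : WithOne S))]

variable {K M M' : Type*} [CommRing K] [AddCommGroup M] [Module K M] [AddCommGroup M'] [Module K M']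
  {m : ℕ}

noncomputable def jacobiMap (B : MultilinearMap K (fun _ : Fin (m + 1) => M) M) :
    MultilinearMap K (fun _ : Fin (2 * m + 1) => M) M :=
  ∑ σ : Perm (Fin (2 * m + 1)), (Perm.sign σ : ℤ) •
    (B.curryLeft.compMultilinearMap B).uncurrySum.domDomCongr ((jacobiSplit m).trans σ)

theorem jacobiMap_apply (B : MultilinearMap K (fun _ : Fin (m + 1) => M) M)
    (x : Fin (2 * m + 1) → M) :
    jacobiMap B x = ∑ σ : Perm (Fin (2 * m + 1)), (Perm.sign σ : ℤ) •
      B (Fin.cons (B fun j => x (σ (jacobiHead m j))) fun j => x (σ (jacobiTail m j))) := by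
  simp only [jacobiMap, sum_apply, smul_apply]
  rfl

theorem gji_iff_forall_jacobiMap_eq_zero (B : AlternatingMap K M M (Fin (m + 1))) :
    GJI B ↔ ∀ x, jacobiMap B.toMultilinearMap x = 0 := by
  simp only [jacobiMap_apply]
  rfl

theorem jacobiMap_comp (f : M →ₗ[K] M') {B : MultilinearMap K (fun _ : Fin (m + 1) => M) M}
    {B' : MultilinearMap K (fun _ : Fin (m + 1) => M') M'} (h : ∀ x, B' (f ∘ x) = f (B x))
    (x : Fin (2 * m + 1) → M) : jacobiMap B' (f ∘ x) = f (jacobiMap B x) := by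
  simp only [jacobiMap_apply, map_sum, map_zsmul, ← h, Fin.comp_cons]
  rfl

theorem GJI.of_surjective {f : M →ₗ[K] M'} (hf : Surjective f)
    {B : AlternatingMap K M M (Fin (m + 1))} {B' : AlternatingMap K M' M' (Fin (m + 1))}
    (h : ∀ x, B' (f ∘ x) = f (B x)) (hB : GJI B) : GJI B' := by
  rw [gji_iff_forall_jacobiMap_eq_zero] at hB ⊢
  intro x'
  obtain ⟨x, rfl⟩ := hf.comp_left x'
  rw [jacobiMap_comp f h, hB, map_zero]

end Jacobi

section Quotient

variable {R ι M N : Type*}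

theorem MultilinearMap.map_mem_of_mem_span [Semiring R] [AddCommMonoid M] [Module R M]
    [AddCommMonoid N] [Module R N]
    {f : MultilinearMap R (fun _ : ι => M) N} {s : Set M} {q : Submodule R N}
    (h : ∀ v i, v i ∈ s → f v ∈ q) {v : ι → M} {i : ι}
    (hv : v i ∈ Submodule.span R s) :
    f v ∈ q := by
  classical
  have hspan : Submodule.span R s ≤ q.comap (f.toLinearMap v i) :=
    Submodule.span_le.2 fun u hu => by simpa using h (update v i u) i (by simpa using hu)
  simpa using hspan hv

variable [Fintype ι]

theorem MultilinearMap.map_sub_map_mem [Ring R] [AddCommGroup M] [Module R M]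
    [AddCommGroup N] [Module R N]
    {f : MultilinearMap R (fun _ : ι => M) N} {p : Submodule R M} {q : Submodule R N}
    (h : ∀ v i, v i ∈ p → f v ∈ q) {v w : ι → M} (hvw : ∀ i, v i - w i ∈ p) :
    f v - f w ∈ q := by
  classical
  have hexp := f.map_add_univ w (v - w)
  rw [add_sub_cancel, ← Finset.add_sum_erase _ _ (Finset.mem_univ Finset.univ),
    Finset.piecewise_univ] at hexp
  rw [hexp, add_sub_cancel_left]
  refine q.sum_mem fun s hs => ?_
  obtain ⟨i, -, hi⟩ := Finset.exists_of_ssubset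
    (Finset.ssubset_univ_iff.2 (Finset.ne_of_mem_erase hs))
  exact h _ i (by simpa [Finset.piecewise_eq_of_notMem _ _ _ hi] using hvw i)

theorem AlternatingMap.exists_quotient_lift [DivisionRing R] [AddCommGroup M] [Module R M]
    [AddCommGroup N] [Module R N]
    (f : AlternatingMap R M N ι) {p : Submodule R M} {q : Submodule R N}
    (h : ∀ v i, v i ∈ p → f v ∈ q) :
    ∃ g : AlternatingMap R (M ⧸ p) (N ⧸ q) ι,
      ∀ v, g (fun i => Submodule.Quotient.mk (v i)) = Submodule.Quotient.mk (f v) := by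
  obtain ⟨c, hc⟩ := p.exists_isCompl
  let lift : (M ⧸ p) →ₗ[R] M := c.subtype ∘ₗ (p.quotientEquivOfIsCompl c hc).toLinearMap
  refine ⟨q.mkQ.compAlternatingMap (f.compLinearMap lift), fun v => ?_⟩
  refine (Submodule.Quotient.eq q).2 (MultilinearMap.map_sub_map_mem (f := f.toMultilinearMap) h
    fun i => (Submodule.Quotient.eq p).1 ?_)
  exact Submodule.mk_quotientEquivOfIsCompl_apply hc _

end Quotient

section Expansion

variable {K G S : Type*} [CommRing K] [AddCommGroup G] [Module K G] {m : ℕ}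

theorem MultilinearMap.map_eq_sum_single {ι N : Type*} [Fintype ι] [DecidableEq ι]
    [AddCommGroup N] [Module K N] (f : MultilinearMap K (fun _ : ι => S →₀ G) N)
    (x : ι → S →₀ G) :
    f x = ∑ r ∈ Fintype.piFinset fun i => (x i).support,
      f fun i => Finsupp.single (r i) (x i (r i)) := by
  conv_lhs => rw [← funext fun i => (x i).sum_single]
  exact f.map_sum_finset _ _

theorem cons_gen {n : ℕ} (a : S) (u : G) (p : Fin n → S) (q : Fin n → G) :
    (Fin.cons (gen a u) (fun j => gen (p j) (q j)) : Fin (n + 1) → S →₀ G) =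
      fun k => gen ((Fin.cons a p : Fin (n + 1) → S) k)
        ((Fin.cons u q : Fin (n + 1) → G) k) := by
  funext k
  cases k using Fin.cases <;> rfl

variable [CommSemigroup S]

theorem jacobiMap_gen {B : MultilinearMap K (fun _ : Fin (m + 1) => G) G}
    {Bexp : MultilinearMap K (fun _ : Fin (m + 1) => S →₀ G) (S →₀ G)}
    (hBexp : ∀ (lam : Fin (m + 1) → S) (x : Fin (m + 1) → G),
      Bexp (fun k => gen (lam k) (x k)) = gen (sprod lam) (B x))
    (r : Fin (2 * m + 1) → S) (y : Fin (2 * m + 1) → G) :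
    jacobiMap Bexp (fun k => gen (r k) (y k)) = gen (sprod r) (jacobiMap B y) := by
  have hterm : ∀ σ : Perm (Fin (2 * m + 1)),
      Bexp (Fin.cons (Bexp fun j => gen (r (σ (jacobiHead m j))) (y (σ (jacobiHead m j))))
          fun j => gen (r (σ (jacobiTail m j))) (y (σ (jacobiTail m j)))) =
        gen (sprod r)
          (B (Fin.cons (B fun j => y (σ (jacobiHead m j))) fun j => y (σ (jacobiTail m j)))) := by
    intro σ
    rw [hBexp, cons_gen, hBexp, sprod_cons_sprod]
  simp only [jacobiMap_apply, hterm]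
  simp only [gen, Finsupp.smul_single, Finsupp.single_finsetSum]

theorem GJI.expand {B : AlternatingMap K G G (Fin (m + 1))}
    {Bexp : AlternatingMap K (S →₀ G) (S →₀ G) (Fin (m + 1))}
    (hBexp : ∀ (lam : Fin (m + 1) → S) (x : Fin (m + 1) → G),
      Bexp (fun k => gen (lam k) (x k)) = gen (sprod lam) (B x)) (hB : GJI B) : GJI Bexp := by
  rw [gji_iff_forall_jacobiMap_eq_zero] at hB ⊢
  intro x
  rw [MultilinearMap.map_eq_sum_single]
  refine Finset.sum_eq_zero fun r _ => ?_
  refine (jacobiMap_gen (B := B.toMultilinearMap) hBexp r fun i => x i (r i)).trans ?_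
  rw [hB, gen, Finsupp.single_zero]

theorem map_mem_span_gen_of_mem {z : S} (hz : ∀ s, z * s = z) {B : (Fin (m + 1) → G) → G}
    {Bexp : MultilinearMap K (fun _ : Fin (m + 1) => S →₀ G) (S →₀ G)}
    (hBexp : ∀ (lam : Fin (m + 1) → S) (x : Fin (m + 1) → G),
      Bexp (fun k => gen (lam k) (x k)) = gen (sprod lam) (B x))
    {v : Fin (m + 1) → S →₀ G} {i : Fin (m + 1)}
    (hv : v i ∈ Submodule.span K {e | ∃ x, e = gen z x}) :
    Bexp v ∈ Submodule.span K {e | ∃ x, e = gen z x} := by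
  refine MultilinearMap.map_mem_of_mem_span (fun v i hvi => ?_) hv
  obtain ⟨y, hy⟩ := hvi
  rw [MultilinearMap.map_eq_sum_single]
  refine Submodule.sum_mem _ fun r hr => ?_
  have hri : r i = z := by
    have hri := Fintype.mem_piFinset.1 hr i
    rw [hy] at hri
    simpa using Finsupp.support_single_subset hri
  exact Submodule.subset_span ⟨_, (hBexp r _).trans (by rw [sprod_eq_of_absorbing hz r hri])⟩

end Expansion

theorem zeroS_reduced_multialgebra_general {K G S : Type*} [Field K] [AddCommGroup G] [Module K G]
    [CommSemigroup S] (m : ℕ)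
    (z : S) (hz : ∀ lam : S, z * lam = z)
    (B : AlternatingMap K G G (Fin (m + 1))) (hB : GJI B)
    (Bexp : AlternatingMap K (S →₀ G) (S →₀ G) (Fin (m + 1)))
    (hBexp : ∀ (lam : Fin (m + 1) → S) (x : Fin (m + 1) → G),
      Bexp (fun k => gen (lam k) (x k)) = gen (sprod lam) (B x)) :
    ∃ Bq : AlternatingMap K
        ((S →₀ G) ⧸ Submodule.span K {e : S →₀ G | ∃ x : G, e = gen z x})
        ((S →₀ G) ⧸ Submodule.span K {e : S →₀ G | ∃ x : G, e = gen z x})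
        (Fin (m + 1)),
      (∀ x : Fin (m + 1) → (S →₀ G),
        Bq (fun k => Submodule.Quotient.mk (x k)) = Submodule.Quotient.mk (Bexp x)) ∧
      GJI (K := K)
        (G := (S →₀ G) ⧸ Submodule.span K {e : S →₀ G | ∃ x : G, e = gen z x}) Bq := by
  obtain ⟨Bq, hBq⟩ := Bexp.exists_quotient_lift fun v i hv =>
    map_mem_span_gen_of_mem hz (Bexp := Bexp.toMultilinearMap) hBexp hv
  exact ⟨Bq, hBq, (hB.expand hBexp).of_surjective (Submodule.mkQ_surjective _) hBq⟩

/-- if S has a zero element 0_S, the quotient of S⊗G by the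
subspace spanned by `{0_S ⊗ x : x ∈ G}` carries a well-defined induced
alternating (m+1)-bracket satisfying the generalized Jacobi identity
(the 0_S-reduced multialgebra). -/
theorem zeroS_reduced_multialgebra {K G S : Type*} [Field K] [AddCommGroup G] [Module K G]
    [CommSemigroup S] [Finite S] (m : ℕ) (hn : Even (m + 1))
    (z : S) (hz : ∀ lam : S, z * lam = z)
    (B : AlternatingMap K G G (Fin (m + 1))) (hB : GJI B)
    (Bexp : AlternatingMap K (S →₀ G) (S →₀ G) (Fin (m + 1)))
    (hBexp : ∀ (lam : Fin (m + 1) → S) (x : Fin (m + 1) → G),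
      Bexp (fun k => gen (lam k) (x k)) = gen (sprod lam) (B x)) :
    ∃ Bq : AlternatingMap K
        ((S →₀ G) ⧸ Submodule.span K {e : S →₀ G | ∃ x : G, e = gen z x})
        ((S →₀ G) ⧸ Submodule.span K {e : S →₀ G | ∃ x : G, e = gen z x})
        (Fin (m + 1)),
      (∀ x : Fin (m + 1) → (S →₀ G),
        Bq (fun k => Submodule.Quotient.mk (x k)) = Submodule.Quotient.mk (Bexp x)) ∧
      GJI (K := K)
        (G := (S →₀ G) ⧸ Submodule.span K {e : S →₀ G | ∃ x : G, e = gen z x}) Bq :=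
  zeroS_reduced_multialgebra_general m z hz B hB Bexp hBexp
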